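/- Let E be a complex vector bundle of rank r with Chern roots a_1,...,a_r. Define T̃*_y(E) = ∏_i Q̃_y(a_i) with Q̃_y(a) = a(1+y·exp(-a))/(1-exp(-a)) and T*_y(E) = ∏_i Q_y(a_i) with Q_y(a) = a(1+y)/(1-exp(-a(1+y))) - a·y. Then for each i ≥ 0 the degree-2i component satisfies T̃^i_y(E) = (1+y)^{r-i} · T^i_y(E). -/

import Mathlib

/-!
STATEMENT 4.  Chern-roots formalism: for formal variables `a_1, ..., a_r`
(multivariate power series over `ℚ[y]`, with `emb r j f` denoting the univariate
series `f` placed in the variable `a_j`), the degree-`i` homogeneous component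
(i.e. each coefficient of a monomial `d` of total degree `i`) of
`T̃*_y = ∏_j Q̃_y(a_j)` equals `(1+y)^{r-i}` times the corresponding coefficient of
`T*_y = ∏_j Q_y(a_j)`, as elements of `ℚ[y, (1+y)⁻¹]` (realized as the localization
of `ℚ[y]` away from `1+y`, with `u` the unit `1+y` there, so that `(1+y)^{r-i}`
makes sense as `u^((r:ℤ)-i)`).

Here `t = a/(1-exp(-a))` is characterized by `t * (1-exp(-a)) = a`,
`Q_y(a) = rescale (1+y) t - y·a` and `Q̃_y(a) = t * (1 + y·exp(-a))`.
-/

open PowerSeries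

noncomputable section

/-- The univariate power series `f`, viewed as a multivariate power series in the
single variable `a_j` among `a_1, ..., a_r`. -/
def emb (r : ℕ) (j : Fin r) (f : PowerSeries (Polynomial ℚ)) :
    MvPowerSeries (Fin r) (Polynomial ℚ) :=
  fun d => if d = Finsupp.single j (d j) then PowerSeries.coeff (R := Polynomial ℚ) (d j) f else 0

/-- The ring `ℚ[y, (1+y)⁻¹]`. -/
abbrev Lloc : Type := Localization.Away ((1 : Polynomial ℚ) + Polynomial.X)

/-!
Writing `T = t(a(1+y))` and `F = exp(-a(1+y))`, the relation `T (1 - F) = (1+y) a` gives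
`T (1 + y F) = (1+y) T - y T (1 - F) = (1+y) (T - y a)`, i.e. `Q̃_y(a(1+y)) = (1+y) Q_y(a)`.
Comparing coefficients of `aⁿ`, the `n`-th coefficient of `Q̃_y` is `(1+y)^(1-n)` times that
of `Q_y`. The coefficient of a monomial `a^d` in a product over the Chern roots is the product
of the single-variable coefficients, so it picks up `∏ⱼ (1+y)^(1-dⱼ) = (1+y)^(r-|d|)`.
-/

theorem coeff_emb {r : ℕ} (j : Fin r) (f : PowerSeries (Polynomial ℚ)) (d : Fin r →₀ ℕ) :
    MvPowerSeries.coeff d (emb r j f) = if d = .single j (d j) then coeff (d j) f else 0 :=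
  rfl

theorem coeff_prod_emb {r : ℕ} (f : Fin r → PowerSeries (Polynomial ℚ)) (d : Fin r →₀ ℕ) :
    MvPowerSeries.coeff d (∏ j, emb r j (f j)) = ∏ j, PowerSeries.coeff (d j) (f j) := by
  classical
  let l₀ : Fin r →₀ Fin r →₀ ℕ := Finsupp.equivFunOnFinite.symm fun j => .single j (d j)
  have hl₀ : l₀ ∈ Finset.finsuppAntidiag Finset.univ d := by
    simp [Finset.mem_finsuppAntidiag, l₀, Finsupp.univ_sum_single d]
  rw [MvPowerSeries.coeff_prod, Finset.sum_eq_single_of_mem l₀ hl₀]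
  · refine Finset.prod_congr rfl fun j _ => ?_
    simp [coeff_emb, l₀]
  · intro l hl hne
    rw [Finset.mem_finsuppAntidiag] at hl
    obtain ⟨j, hj⟩ : ∃ j, l j ≠ .single j (l j j) := by
      by_contra! hsingle
      refine hne (Finsupp.ext fun j => ?_)
      have hdiag : l j j = d j := by
        rw [← hl.1, Finset.sum_apply', Finset.sum_eq_single j]
        · intro k _ hk
          rw [hsingle k, Finsupp.single_eq_of_ne hk.symm]
        · simp
      simp [l₀, ← hdiag, ← hsingle j]
    exact Finset.prod_eq_zero (Finset.mem_univ j) ((coeff_emb ..).trans (if_neg hj))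

theorem rescale_mul_one_add_C_mul {R : Type*} [CommRing R] {t E : PowerSeries R}
    (h : t * (1 - E) = X) (c : R) :
    rescale (1 + c) (t * (1 + C c * E)) = C (1 + c) * (rescale (1 + c) t - C c * X) := by
  have hs := congrArg (rescale (1 + c)) h
  rw [map_mul, map_sub, map_one, rescale_X, map_add, map_one] at hs
  have hC : rescale (1 + c) (C c) = C c := by
    ext (_ | _) <;> simp [coeff_rescale, coeff_C]
  rw [map_mul, map_add, map_one, map_mul, hC, map_add, map_one]
  linear_combination (-C c) * hs

theorem pow_mul_coeff_mul_one_add_C_mul {R : Type*} [CommRing R] {t E : PowerSeries R}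
    (h : t * (1 - E) = X) (c : R) (n : ℕ) :
    (1 + c) ^ n * coeff n (t * (1 + C c * E)) = (1 + c) * coeff n (rescale (1 + c) t - C c * X) := by
  simpa only [coeff_rescale, coeff_C_mul] using congrArg (coeff n) (rescale_mul_one_add_C_mul h c)

theorem Units.eq_zpow_one_sub_mul {M : Type*} [CommMonoid M] (u : Mˣ) {a b : M} {n : ℕ}
    (h : (u : M) ^ n * a = u * b) : a = ((u ^ (1 - n : ℤ) : Mˣ) : M) * b := by
  calc a = ((u ^ (-n : ℤ) : Mˣ) : M) * ((u : M) ^ n * a) := by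
        rw [← mul_assoc, ← Units.val_pow_eq_pow_val, ← Units.val_mul, ← zpow_natCast, ← zpow_add,
          neg_add_cancel, zpow_zero, Units.val_one, one_mul]
    _ = ((u ^ (1 - n : ℤ) : Mˣ) : M) * b := by
        rw [h, ← mul_assoc, ← Units.val_mul, ← zpow_add_one, sub_eq_neg_add]

theorem Finset.prod_zpow_eq_zpow_sum {G ι : Type*} [CommGroup G] (s : Finset ι) (f : ι → ℤ)
    (g : G) : ∏ i ∈ s, g ^ f i = g ^ ∑ i ∈ s, f i := by
  classical
  induction s using Finset.induction_on with
  | empty => simp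
  | insert _ _ h ih => rw [Finset.sum_insert h, Finset.prod_insert h, zpow_add, ih]

theorem stmt4 (t : PowerSeries (Polynomial ℚ))
    (ht : t * (1 - rescale (-1) (PowerSeries.exp (Polynomial ℚ))) = PowerSeries.X)
    (r i : ℕ) (u : Llocˣ)
    (hu : (u : Lloc) = algebraMap (Polynomial ℚ) Lloc (1 + Polynomial.X))
    (d : Fin r →₀ ℕ) (hd : (d.sum fun _ m => m) = i) :
    algebraMap (Polynomial ℚ) Lloc
        (MvPowerSeries.coeff (R := Polynomial ℚ) d
          (∏ j : Fin r, emb r j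
            (t * (1 + PowerSeries.C (R := Polynomial ℚ) Polynomial.X *
              rescale (-1) (PowerSeries.exp (Polynomial ℚ))))))
      = ((u ^ ((r : ℤ) - (i : ℤ)) : Llocˣ) : Lloc) *
        algebraMap (Polynomial ℚ) Lloc
          (MvPowerSeries.coeff (R := Polynomial ℚ) d
            (∏ j : Fin r, emb r j
              (rescale (1 + Polynomial.X) t -
                PowerSeries.C (R := Polynomial ℚ) Polynomial.X * PowerSeries.X))) := by
  have hcoeff (n : ℕ) := congrArg (algebraMap _ Lloc)
    (pow_mul_coeff_mul_one_add_C_mul ht Polynomial.X n)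
  simp only [map_mul, map_pow, ← hu] at hcoeff
  have hexp : ∑ j, ((1 : ℤ) - d j) = r - i := by
    simp [← hd, Finsupp.sum_fintype]
  rw [coeff_prod_emb (fun _ => _), coeff_prod_emb (fun _ => _), map_prod, map_prod,
    Finset.prod_congr rfl fun j _ => Units.eq_zpow_one_sub_mul u (hcoeff (d j)),
    Finset.prod_mul_distrib, ← Units.coe_prod, Finset.prod_zpow_eq_zpow_sum, hexp]
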